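/- arXiv:2512.13466 — 3 statements merged into one kernel-verified Lean document; each statement's English description precedes it below -/
import Mathlib

section
/- Enforced constraint restoration: let x : [0, T) → ℝⁿ be a differentiable solution of the autonomous system x'(t) = ψ(x(t)), and suppose the Jacobian J(x(t)) has full row rank for all t. Then the constraint residual decays exponentially: g(x(t)) = e^{−t} g(x(0)) for all t ∈ [0, T). -/
open Matrix

/-- The orthogonal projector `P(J) = I - Jᵀ (J Jᵀ)⁻¹ J` built from a Jacobian matrix. -/
noncomputable def projMat {m n : ℕ} (J : Matrix (Fin m) (Fin n) ℝ) :
    Matrix (Fin n) (Fin n) ℝ :=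
  1 - Jᵀ * (J * Jᵀ)⁻¹ * J

/-- The vector field `ψ(x) = -Jᵀ (J Jᵀ)⁻¹ g(x) - P(x) ∇f(x)`. -/
noncomputable def psi {m n : ℕ}
    (g : EuclideanSpace ℝ (Fin n) → EuclideanSpace ℝ (Fin m))
    (gradf : EuclideanSpace ℝ (Fin n) → EuclideanSpace ℝ (Fin n))
    (J : EuclideanSpace ℝ (Fin n) → Matrix (Fin m) (Fin n) ℝ)
    (x : EuclideanSpace ℝ (Fin n)) : EuclideanSpace ℝ (Fin n) :=
  -(Matrix.toEuclideanLin ((J x)ᵀ * (J x * (J x)ᵀ)⁻¹) (g x)) -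
    Matrix.toEuclideanLin (projMat (J x)) (gradf x)

/- Since `J Jᵀ (J Jᵀ)⁻¹ = 1` and `J P = 0`, the chain rule gives `(g ∘ x)' = J ψ = -(g ∘ x)` along
a trajectory, so `t ↦ eᵗ g(x(t))` has zero derivative on `[0, T)` and is therefore constant. -/

theorem eq_exp_mul_smul_of_hasDerivAt_eq_smul {E : Type*} [NormedAddCommGroup E]
    [NormedSpace ℝ E] {y : ℝ → E} {a T : ℝ}
    (hy : ∀ t ∈ Set.Ico 0 T, HasDerivAt y (a • y t) t) :
    ∀ t ∈ Set.Ico 0 T, y t = Real.exp (a * t) • y 0 := by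
  intro t ⟨ht0, htT⟩
  have hsub : Set.Icc 0 t ⊆ Set.Ico 0 T := Set.Icc_subset_Ico_right htT
  set w : ℝ → E := fun s => Real.exp (-(a * s)) • y s
  have hw : ∀ s ∈ Set.Ico 0 T, HasDerivAt w 0 s := by
    intro s hs
    have h : HasDerivAt w _ s := ((hasDerivAt_id s).const_mul a).neg.exp.smul (hy s hs)
    simpa [smul_smul, mul_comm] using h
  have hconst : w t = w 0 :=
    constant_of_has_deriv_right_zero
      (fun s hs => (hw s (hsub hs)).continuousAt.continuousWithinAt)
      (fun s hs => (hw s (hsub (Set.Ico_subset_Icc_self hs))).hasDerivWithinAt) t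
      ⟨ht0, le_rfl⟩
  simpa [w, smul_smul, ← Real.exp_add] using congrArg (Real.exp (a * t) • ·) hconst

section

variable {m n : ℕ} {J : Matrix (Fin m) (Fin n) ℝ}

theorem mul_transpose_mul_inv (hJ : IsUnit (J * Jᵀ)) : J * (Jᵀ * (J * Jᵀ)⁻¹) = 1 := by
  rw [← Matrix.mul_assoc, Matrix.mul_nonsing_inv _ ((Matrix.isUnit_iff_isUnit_det _).mp hJ)]

theorem mul_projMat (hJ : IsUnit (J * Jᵀ)) : J * projMat J = 0 := by
  rw [projMat, Matrix.mul_sub, Matrix.mul_one, ← Matrix.mul_assoc, mul_transpose_mul_inv hJ,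
    Matrix.one_mul, sub_self]

end

theorem toEuclideanLin_apply_psi {m n : ℕ}
    (g : EuclideanSpace ℝ (Fin n) → EuclideanSpace ℝ (Fin m))
    (gradf : EuclideanSpace ℝ (Fin n) → EuclideanSpace ℝ (Fin n))
    (J : EuclideanSpace ℝ (Fin n) → Matrix (Fin m) (Fin n) ℝ) (y : EuclideanSpace ℝ (Fin n))
    (hJ : IsUnit (J y * (J y)ᵀ)) :
    Matrix.toEuclideanLin (J y) (psi g gradf J y) = -g y := by
  simp only [psi, map_sub, map_neg, Matrix.toLpLin_apply, Matrix.mulVec_mulVec,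
    mul_transpose_mul_inv hJ, mul_projMat hJ, Matrix.one_mulVec, Matrix.zero_mulVec]
  simp

theorem constraint_restoration_general (m n : ℕ)
    (g : EuclideanSpace ℝ (Fin n) → EuclideanSpace ℝ (Fin m))
    (gradf : EuclideanSpace ℝ (Fin n) → EuclideanSpace ℝ (Fin n))
    (J : EuclideanSpace ℝ (Fin n) → Matrix (Fin m) (Fin n) ℝ)
    (hJ : ∀ y, HasFDerivAt g
      (LinearMap.toContinuousLinearMap (Matrix.toEuclideanLin (J y))) y)
    (T : ℝ) (x : ℝ → EuclideanSpace ℝ (Fin n))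
    (hx : ∀ t ∈ Set.Ico (0 : ℝ) T, HasDerivAt x (psi g gradf J (x t)) t)
    (hrank : ∀ t ∈ Set.Ico (0 : ℝ) T, IsUnit (J (x t) * (J (x t))ᵀ)) :
    ∀ t ∈ Set.Ico (0 : ℝ) T, g (x t) = Real.exp (-t) • g (x 0) := by
  have hgx : ∀ t ∈ Set.Ico (0 : ℝ) T, HasDerivAt (g ∘ x) ((-1 : ℝ) • (g ∘ x) t) t := by
    intro t ht
    have h := (hJ (x t)).comp_hasDerivAt t (hx t ht)
    rwa [LinearMap.coe_toContinuousLinearMap', toEuclideanLin_apply_psi g gradf J _ (hrank t ht),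
      ← neg_one_smul ℝ] at h
  intro t ht
  simpa using eq_exp_mul_smul_of_hasDerivAt_eq_smul hgx t ht

/-- Enforced constraint restoration: along any differentiable solution of
`x' = ψ(x)` on `[0, T)` with full-row-rank Jacobian, the constraint residual decays
exponentially: `g(x(t)) = e^{-t} g(x(0))`. -/
theorem constraint_restoration (m n : ℕ) (hmn : m < n)
    (f : EuclideanSpace ℝ (Fin n) → ℝ)
    (g : EuclideanSpace ℝ (Fin n) → EuclideanSpace ℝ (Fin m))
    (gradf : EuclideanSpace ℝ (Fin n) → EuclideanSpace ℝ (Fin n))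
    (J : EuclideanSpace ℝ (Fin n) → Matrix (Fin m) (Fin n) ℝ)
    (hf : ContDiff ℝ 1 f) (hg : ContDiff ℝ 1 g)
    (hgrad : ∀ y, HasGradientAt f (gradf y) y)
    (hJ : ∀ y, HasFDerivAt g
      (LinearMap.toContinuousLinearMap (Matrix.toEuclideanLin (J y))) y)
    (T : ℝ) (x : ℝ → EuclideanSpace ℝ (Fin n))
    (hx : ∀ t ∈ Set.Ico (0 : ℝ) T, HasDerivAt x (psi g gradf J (x t)) t)
    (hrank : ∀ t ∈ Set.Ico (0 : ℝ) T, IsUnit (J (x t) * (J (x t))ᵀ)) :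
    ∀ t ∈ Set.Ico (0 : ℝ) T, g (x t) = Real.exp (-t) • g (x 0) :=
  constraint_restoration_general m n g gradf J hJ T x hx hrank
end

section
/- Descent property on the feasible set: let x : [0, T) → ℝⁿ be a differentiable solution of x'(t) = ψ(x(t)) that remains in the feasible set (g(x(t)) = 0 for all t) and along which the Jacobian J(x(t)) has full row rank. Then the cost decreases along the trajectory: d/dt f(x(t)) = −‖P(x(t))∇f(x(t))‖² ≤ 0 for all t, where ‖·‖ is the Euclidean norm. -/
open Matrix

/-! On the feasible set the first term of `ψ` vanishes, so `ψ = -P ∇f` and the chain rule gives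
`d/dt f(x(t)) = -⟪∇f, P ∇f⟫`. Since `P` is symmetric and idempotent, `⟪v, P v⟫ = ⟪P v, P v⟫ = ‖P v‖²`. -/

theorem HasGradientAt.hasDerivAt_comp {F : Type*} [NormedAddCommGroup F]
    [InnerProductSpace ℝ F] [CompleteSpace F] {f : F → ℝ} {f' : F} {x : ℝ → F} {x' : F} {t : ℝ}
    (hf : HasGradientAt f f' (x t)) (hx : HasDerivAt x x' t) :
    HasDerivAt (fun s => f (x s)) (inner ℝ f' x') t :=
  hf.hasFDerivAt.comp_hasDerivAt t hx

theorem real_inner_toEuclideanLin_self_eq_norm_sq {ι : Type*} [Fintype ι] [DecidableEq ι]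
    {A : Matrix ι ι ℝ} (hA : Aᵀ * A = A) (v : EuclideanSpace ℝ ι) :
    inner ℝ v (toEuclideanLin A v) = ‖toEuclideanLin A v‖ ^ 2 := by
  have hadj : LinearMap.adjoint (toEuclideanLin A) = toEuclideanLin Aᵀ := by
    rw [← toEuclideanLin_conjTranspose_eq_adjoint, conjTranspose_eq_transpose_of_trivial]
  rw [← real_inner_self_eq_norm_sq, ← LinearMap.adjoint_inner_right, hadj,
    ← LinearMap.comp_apply, ← toLpLin_mul_same, hA]

section projMat

variable {m n : ℕ} (J : Matrix (Fin m) (Fin n) ℝ)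

theorem projMat_transpose : (projMat J)ᵀ = projMat J := by
  simp [projMat, transpose_sub, transpose_mul, transpose_nonsing_inv, Matrix.mul_assoc]

theorem projMat_mul_self (h : IsUnit (J * Jᵀ)) : projMat J * projMat J = projMat J := by
  have hinv : (J * Jᵀ)⁻¹ * (J * Jᵀ) = 1 :=
    nonsing_inv_mul _ ((isUnit_iff_isUnit_det _).mp h)
  have hQ : (Jᵀ * (J * Jᵀ)⁻¹ * J) * (Jᵀ * (J * Jᵀ)⁻¹ * J) = Jᵀ * (J * Jᵀ)⁻¹ * J := by
    calc (Jᵀ * (J * Jᵀ)⁻¹ * J) * (Jᵀ * (J * Jᵀ)⁻¹ * J)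
        = Jᵀ * ((J * Jᵀ)⁻¹ * (J * Jᵀ)) * (J * Jᵀ)⁻¹ * J := by simp only [Matrix.mul_assoc]
      _ = Jᵀ * (J * Jᵀ)⁻¹ * J := by rw [hinv, Matrix.mul_one]
  simp only [projMat, sub_mul, mul_sub, one_mul, mul_one, hQ]
  abel

end projMat

theorem psi_eq_neg_of_eq_zero {m n : ℕ}
    {g : EuclideanSpace ℝ (Fin n) → EuclideanSpace ℝ (Fin m)}
    (gradf : EuclideanSpace ℝ (Fin n) → EuclideanSpace ℝ (Fin n))
    (J : EuclideanSpace ℝ (Fin n) → Matrix (Fin m) (Fin n) ℝ)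
    {x : EuclideanSpace ℝ (Fin n)} (hx : g x = 0) :
    psi g gradf J x = -toEuclideanLin (projMat (J x)) (gradf x) := by
  simp [psi, hx]

theorem descent_on_feasible_set_general (m n : ℕ)
    (f : EuclideanSpace ℝ (Fin n) → ℝ)
    (g : EuclideanSpace ℝ (Fin n) → EuclideanSpace ℝ (Fin m))
    (gradf : EuclideanSpace ℝ (Fin n) → EuclideanSpace ℝ (Fin n))
    (J : EuclideanSpace ℝ (Fin n) → Matrix (Fin m) (Fin n) ℝ)
    (hgrad : ∀ y, HasGradientAt f (gradf y) y)
    (T : ℝ) (x : ℝ → EuclideanSpace ℝ (Fin n))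
    (hx : ∀ t ∈ Set.Ico (0 : ℝ) T, HasDerivAt x (psi g gradf J (x t)) t)
    (hfeas : ∀ t ∈ Set.Ico (0 : ℝ) T, g (x t) = 0)
    (hrank : ∀ t ∈ Set.Ico (0 : ℝ) T, IsUnit (J (x t) * (J (x t))ᵀ)) :
    ∀ t ∈ Set.Ico (0 : ℝ) T,
      HasDerivAt (fun s => f (x s))
        (-‖Matrix.toEuclideanLin (projMat (J (x t))) (gradf (x t))‖ ^ 2) t ∧
      -‖Matrix.toEuclideanLin (projMat (J (x t))) (gradf (x t))‖ ^ 2 ≤ 0 := by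
  intro t ht
  have hP : (projMat (J (x t)))ᵀ * projMat (J (x t)) = projMat (J (x t)) := by
    rw [projMat_transpose, projMat_mul_self _ (hrank t ht)]
  have hderiv := (hgrad (x t)).hasDerivAt_comp (hx t ht)
  rw [psi_eq_neg_of_eq_zero gradf J (hfeas t ht), inner_neg_right,
    real_inner_toEuclideanLin_self_eq_norm_sq hP] at hderiv
  exact ⟨hderiv, neg_nonpos.mpr (by positivity)⟩

/-- Descent property on the feasible set: along any differentiable solution of
`x' = ψ(x)` on `[0, T)` that stays in the feasible set and along which the Jacobian has
full row rank, `d/dt f(x(t)) = -‖P(x(t)) ∇f(x(t))‖² ≤ 0` (Euclidean norm). -/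
theorem descent_on_feasible_set (m n : ℕ) (hmn : m < n)
    (f : EuclideanSpace ℝ (Fin n) → ℝ)
    (g : EuclideanSpace ℝ (Fin n) → EuclideanSpace ℝ (Fin m))
    (gradf : EuclideanSpace ℝ (Fin n) → EuclideanSpace ℝ (Fin n))
    (J : EuclideanSpace ℝ (Fin n) → Matrix (Fin m) (Fin n) ℝ)
    (hf : ContDiff ℝ 1 f) (hg : ContDiff ℝ 1 g)
    (hgrad : ∀ y, HasGradientAt f (gradf y) y)
    (hJ : ∀ y, HasFDerivAt g
      (LinearMap.toContinuousLinearMap (Matrix.toEuclideanLin (J y))) y)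
    (T : ℝ) (x : ℝ → EuclideanSpace ℝ (Fin n))
    (hx : ∀ t ∈ Set.Ico (0 : ℝ) T, HasDerivAt x (psi g gradf J (x t)) t)
    (hfeas : ∀ t ∈ Set.Ico (0 : ℝ) T, g (x t) = 0)
    (hrank : ∀ t ∈ Set.Ico (0 : ℝ) T, IsUnit (J (x t) * (J (x t))ᵀ)) :
    ∀ t ∈ Set.Ico (0 : ℝ) T,
      HasDerivAt (fun s => f (x s))
        (-‖Matrix.toEuclideanLin (projMat (J (x t))) (gradf (x t))‖ ^ 2) t ∧
      -‖Matrix.toEuclideanLin (projMat (J (x t))) (gradf (x t))‖ ^ 2 ≤ 0 :=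
  descent_on_feasible_set_general m n f g gradf J hgrad T x hx hfeas hrank
end

section
/- Theorem 1: a feasible point x* ∈ FS_g (i.e., g(x*) = 0) at which the Jacobian J(x*) has full row rank is a critical point of the cost function f for the equality-constrained problem min f(x) subject to g(x) = 0 — meaning there exists λ ∈ ℝᵐ with ∇f(x*) + J(x*)ᵀλ = 0, equivalently P(x*)∇f(x*) = 0 — if and only if x* is an equilibrium point of the vector field ψ, i.e., ψ(x*) = 0. -/
/-!
On the feasible set the first term of `ψ` vanishes, so `ψ = -P ∇f`; and when `J Jᵀ` is
invertible, `P` kills `Jᵀ` while `v - P v = Jᵀ (J Jᵀ)⁻¹ J v`, so the kernel of `P` is exactly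
the range of `Jᵀ`, i.e. the set of gradients satisfying the Lagrange condition.
-/

open Matrix

section Projector

variable {m n : ℕ} {J : Matrix (Fin m) (Fin n) ℝ}

theorem projMat_mul_transpose (hJ : IsUnit (J * Jᵀ)) : projMat J * Jᵀ = 0 := by
  rw [projMat, Matrix.sub_mul, Matrix.one_mul, Matrix.mul_assoc, Matrix.mul_assoc,
    Matrix.nonsing_inv_mul _ ((isUnit_iff_isUnit_det _).mp hJ), Matrix.mul_one, sub_self]

theorem toEuclideanLin_projMat_apply (v : EuclideanSpace ℝ (Fin n)) :
    toEuclideanLin (projMat J) v =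
      v - toEuclideanLin Jᵀ (toEuclideanLin ((J * Jᵀ)⁻¹ * J) v) := by
  simp [projMat, Matrix.mul_assoc]

theorem toEuclideanLin_projMat_eq_zero_iff (hJ : IsUnit (J * Jᵀ))
    (v : EuclideanSpace ℝ (Fin n)) :
    toEuclideanLin (projMat J) v = 0 ↔
      ∃ lam : EuclideanSpace ℝ (Fin m), v + toEuclideanLin Jᵀ lam = 0 := by
  constructor
  · intro hv
    refine ⟨-toEuclideanLin ((J * Jᵀ)⁻¹ * J) v, ?_⟩
    rw [toEuclideanLin_projMat_apply] at hv
    rwa [map_neg, ← sub_eq_add_neg]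
  · rintro ⟨lam, hlam⟩
    have hv : v = -toEuclideanLin Jᵀ lam := eq_neg_of_add_eq_zero_left hlam
    rw [hv, map_neg, ← LinearMap.comp_apply, ← toLpLin_mul_same, projMat_mul_transpose hJ,
      map_zero, LinearMap.zero_apply, neg_zero]

end Projector

theorem psi_eq_neg_projMat_apply {m n : ℕ}
    {g : EuclideanSpace ℝ (Fin n) → EuclideanSpace ℝ (Fin m)}
    {gradf : EuclideanSpace ℝ (Fin n) → EuclideanSpace ℝ (Fin n)}
    {J : EuclideanSpace ℝ (Fin n) → Matrix (Fin m) (Fin n) ℝ}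
    {x : EuclideanSpace ℝ (Fin n)} (hx : g x = 0) :
    psi g gradf J x = -toEuclideanLin (projMat (J x)) (gradf x) := by
  rw [psi, hx, map_zero, neg_zero, zero_sub]

theorem critical_iff_equilibrium_general (m n : ℕ)
    (g : EuclideanSpace ℝ (Fin n) → EuclideanSpace ℝ (Fin m))
    (gradf : EuclideanSpace ℝ (Fin n) → EuclideanSpace ℝ (Fin n))
    (J : EuclideanSpace ℝ (Fin n) → Matrix (Fin m) (Fin n) ℝ)
    (xs : EuclideanSpace ℝ (Fin n)) (hfeas : g xs = 0)
    (hrank : IsUnit (J xs * (J xs)ᵀ)) :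
    ((∃ lam : EuclideanSpace ℝ (Fin m),
        gradf xs + Matrix.toEuclideanLin (J xs)ᵀ lam = 0) ↔ psi g gradf J xs = 0) ∧
    ((Matrix.toEuclideanLin (projMat (J xs)) (gradf xs) = 0) ↔ psi g gradf J xs = 0) := by
  have hP : toEuclideanLin (projMat (J xs)) (gradf xs) = 0 ↔ psi g gradf J xs = 0 := by
    rw [psi_eq_neg_projMat_apply hfeas, neg_eq_zero]
  exact ⟨(toEuclideanLin_projMat_eq_zero_iff hrank _).symm.trans hP, hP⟩

/-- Theorem 1: a feasible point `x*` (with `g(x*) = 0`) at which the Jacobian has full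
row rank is a critical point of `f` for the problem `min f s.t. g = 0` — i.e. there is
`λ` with `∇f(x*) + J(x*)ᵀ λ = 0`, equivalently `P(x*) ∇f(x*) = 0` — if and only if
`x*` is an equilibrium of `ψ`, i.e. `ψ(x*) = 0`. -/
theorem critical_iff_equilibrium (m n : ℕ) (hmn : m < n)
    (f : EuclideanSpace ℝ (Fin n) → ℝ)
    (g : EuclideanSpace ℝ (Fin n) → EuclideanSpace ℝ (Fin m))
    (gradf : EuclideanSpace ℝ (Fin n) → EuclideanSpace ℝ (Fin n))
    (J : EuclideanSpace ℝ (Fin n) → Matrix (Fin m) (Fin n) ℝ)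
    (hf : ContDiff ℝ 1 f) (hg : ContDiff ℝ 1 g)
    (hgrad : ∀ y, HasGradientAt f (gradf y) y)
    (hJ : ∀ y, HasFDerivAt g
      (LinearMap.toContinuousLinearMap (Matrix.toEuclideanLin (J y))) y)
    (xs : EuclideanSpace ℝ (Fin n)) (hfeas : g xs = 0)
    (hrank : IsUnit (J xs * (J xs)ᵀ)) :
    ((∃ lam : EuclideanSpace ℝ (Fin m),
        gradf xs + Matrix.toEuclideanLin (J xs)ᵀ lam = 0) ↔ psi g gradf J xs = 0) ∧
    ((Matrix.toEuclideanLin (projMat (J xs)) (gradf xs) = 0) ↔ psi g gradf J xs = 0) :=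
  critical_iff_equilibrium_general m n g gradf J xs hfeas hrank
end
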